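/- Let X be a finite graph, π a correct partition of X, and 𝒳 = WL(X)_π. Then every two vertices that are twins in X and belong to the same fiber of 𝒳 are 𝒳-twins. -/

import Mathlib

/-!
Since `a` and `b` are twins, the transposition `(a b)` is an automorphism of `G`; since they
lie in one fiber of `X` and every `1_Δ`, `Δ ∈ π`, is a union of basis relations, it also
fixes every part of `π` setwise. The orbits on `Ω × Ω` of any group of such permutations form
a coherent configuration having `E` and each `1_Δ` among its relations, so by minimality every
basis relation of `X` is a union of these orbits and hence invariant under `(a b)`. For
`γ ≠ a, b` the transposition maps `(γ, a)` to `(γ, b)`.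
-/

open Set

universe u v

variable {Ω : Type*}

/-- The diagonal relation `1_Δ` of a set `Δ ⊆ Ω`. -/
def diagRel (Δ : Set Ω) : Set (Ω × Ω) := {p | p.1 = p.2 ∧ p.1 ∈ Δ}

/-- The number of points `γ` with `(p.1, γ) ∈ r` and `(γ, p.2) ∈ s`. -/
noncomputable def interNum (r s : Set (Ω × Ω)) (p : Ω × Ω) : ℕ :=
  {γ : Ω | (p.1, γ) ∈ r ∧ (γ, p.2) ∈ s}.ncard

/-- A coherent configuration on `Ω`: a partition `S` of `Ω × Ω` such that the diagonal
is a union of classes, `S` is closed under transposition, and the intersection numbers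
are well defined. -/
structure CoherentConfiguration (Ω : Type u) where
  S : Set (Set (Ω × Ω))
  isPartition : Setoid.IsPartition S
  diag_isRelation : ∃ T ⊆ S, ⋃₀ T = diagRel (Set.univ : Set Ω)
  swap_mem : ∀ s ∈ S, {p : Ω × Ω | (p.2, p.1) ∈ s} ∈ S
  coherent : ∀ r ∈ S, ∀ s ∈ S, ∀ t ∈ S, ∀ p ∈ t, ∀ q ∈ t,
    interNum r s p = interNum r s q

namespace CoherentConfiguration

/-- A relation of `X` is a union of basis relations of `X`. -/
def IsRelation (X : CoherentConfiguration Ω) (r : Set (Ω × Ω)) : Prop :=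
  ∃ T ⊆ X.S, ⋃₀ T = r

/-- A fiber of `X` is a set `Δ` with `1_Δ` a basis relation. -/
def IsFiber (X : CoherentConfiguration Ω) (Δ : Set Ω) : Prop :=
  diagRel Δ ∈ X.S

end CoherentConfiguration

/-- `X ≤ Y` iff every relation of `X` is a relation of `Y`. -/
def CCle (X Y : CoherentConfiguration Ω) : Prop :=
  ∀ r, X.IsRelation r → Y.IsRelation r

/-- The arc set of a graph, as a set of ordered pairs. -/
def adjRel (G : SimpleGraph Ω) : Set (Ω × Ω) := {p | G.Adj p.1 p.2}

/-- `X = WL(G)`: the smallest coherent configuration having the arc set of `G`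
among its relations. -/
def IsWL (G : SimpleGraph Ω) (X : CoherentConfiguration Ω) : Prop :=
  X.IsRelation (adjRel G) ∧
    ∀ Y : CoherentConfiguration Ω, Y.IsRelation (adjRel G) → CCle X Y

/-- `X = WL(G)_π`: the smallest coherent configuration having the arc set of `G`
and every `1_Δ`, `Δ ∈ π`, among its relations. -/
def IsWLPart (G : SimpleGraph Ω) (π : Set (Set Ω)) (X : CoherentConfiguration Ω) : Prop :=
  X.IsRelation (adjRel G) ∧ (∀ Δ ∈ π, X.IsRelation (diagRel Δ)) ∧
    ∀ Y : CoherentConfiguration Ω, Y.IsRelation (adjRel G) →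
      (∀ Δ ∈ π, Y.IsRelation (diagRel Δ)) → CCle X Y

/-- A graph is distance-hereditary if in every connected induced subgraph the distance
function is the same as in the graph itself. -/
def DistanceHereditary {V : Type*} (G : SimpleGraph V) : Prop :=
  ∀ s : Set V, (G.induce s).Connected →
    ∀ u v : s, (G.induce s).dist u v = G.dist u.1 v.1

/-- Two vertices are twins in a graph if every other vertex is adjacent to both
or to neither. -/
def IsTwin (G : SimpleGraph Ω) (a b : Ω) : Prop :=
  ∀ γ, γ ≠ a → γ ≠ b → (G.Adj γ a ↔ G.Adj γ b)

/-- Two points are `X`-twins if for every other point `γ`, the basis relation containing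
`(γ, a)` coincides with the one containing `(γ, b)`. -/
def XTwin (X : CoherentConfiguration Ω) (a b : Ω) : Prop :=
  ∀ γ, γ ≠ a → γ ≠ b → ∀ s ∈ X.S, ((γ, a) ∈ s ↔ (γ, b) ∈ s)

/-- The relation `e_X` of being `X`-twins, as a set of pairs. -/
def twinRel (X : CoherentConfiguration Ω) : Set (Ω × Ω) := {p | XTwin X p.1 p.2}

/-- An equivalence relation on `Ω`, given as a set of pairs. -/
def IsEquivSet (e : Set (Ω × Ω)) : Prop :=
  (∀ a, (a, a) ∈ e) ∧ (∀ a b, (a, b) ∈ e → (b, a) ∈ e) ∧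
    (∀ a b c, (a, b) ∈ e → (b, c) ∈ e → (a, c) ∈ e)

/-- A parabolic of `X` is an equivalence relation which is a relation of `X`. -/
def IsParabolic (X : CoherentConfiguration Ω) (e : Set (Ω × Ω)) : Prop :=
  IsEquivSet e ∧ X.IsRelation e

/-- The dot product (composition) of two relations. -/
def relComp (r s : Set (Ω × Ω)) : Set (Ω × Ω) :=
  {p | ∃ c, (p.1, c) ∈ r ∧ (c, p.2) ∈ s}

/-- An algebraic isomorphism between coherent configurations: a bijection between the
sets of basis relations preserving the intersection numbers. -/
structure AlgIso {Ω : Type u} {Ω' : Type v} (X : CoherentConfiguration Ω)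
    (X' : CoherentConfiguration Ω') where
  toFun : Set (Ω × Ω) → Set (Ω' × Ω')
  bijOn : Set.BijOn toFun X.S X'.S
  card_eq : ∀ r ∈ X.S, ∀ s ∈ X.S, ∀ t ∈ X.S, ∀ p ∈ t, ∀ p' ∈ toFun t,
      interNum r s p = interNum (toFun r) (toFun s) p'

/-- `X` is separable: every algebraic isomorphism from `X` to another coherent
configuration is induced by a bijection of the point sets. -/
def CCSeparable {Ω : Type u} (X : CoherentConfiguration Ω) : Prop :=
  ∀ (Ω' : Type u), Finite Ω' → ∀ (X' : CoherentConfiguration Ω') (φ : AlgIso X X'),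
    ∃ f : Ω → Ω', Function.Bijective f ∧ ∀ s ∈ X.S, φ.toFun s = Prod.map f f '' s

/-- `Ω₋(m)`. -/
def OmegaMinus (m : Set (Ω × Ω)) : Set Ω := {a | ∃ b, (a, b) ∈ m}

/-- `Ω₊(m)`. -/
def OmegaPlus (m : Set (Ω × Ω)) : Set Ω := {b | ∃ a, (a, b) ∈ m}

/-- A matching of `X`: an irreflexive basis relation of valency one in both directions. -/
def IsMatchingCC (X : CoherentConfiguration Ω) (m : Set (Ω × Ω)) : Prop :=
  m ∈ X.S ∧ (∀ p ∈ m, p.1 ≠ p.2) ∧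
    (∀ a b c, (a, b) ∈ m → (a, c) ∈ m → b = c) ∧
    (∀ a b c, (a, c) ∈ m → (b, c) ∈ m → a = b)

/-- A pendant matching of `X` with respect to the graph `G`. -/
def IsPendantMatching (G : SimpleGraph Ω) (X : CoherentConfiguration Ω)
    (m : Set (Ω × Ω)) : Prop :=
  IsMatchingCC X m ∧ OmegaMinus m ≠ OmegaPlus m ∧
    ∀ p ∈ m, G.Adj p.1 p.2 ∧ ∀ c, G.Adj p.1 c → c = p.2

/-- A twin matching of `X` with respect to the graph `G`. -/
def IsTwinMatching (G : SimpleGraph Ω) (X : CoherentConfiguration Ω)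
    (m : Set (Ω × Ω)) : Prop :=
  IsMatchingCC X m ∧ OmegaMinus m ≠ OmegaPlus m ∧ ∀ p ∈ m, IsTwin G p.1 p.2

/-- The quotient graph of `G` modulo a (twin) equivalence relation `r`: two distinct
classes are adjacent iff every vertex of one is adjacent to every vertex of the other. -/
def quotGraph (G : SimpleGraph Ω) (r : Ω → Ω → Prop) : SimpleGraph (Quot r) where
  Adj c d := c ≠ d ∧ ∀ a b : Ω, Quot.mk r a = c → Quot.mk r b = d → G.Adj a b
  symm := ⟨fun _ _ h => ⟨h.1.symm, fun a b ha hb => (h.2 b a hb ha).symm⟩⟩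
  loopless := ⟨fun _ h => h.1 rfl⟩

/-- The restriction of a relation on `Ω` to the complement of `Δ`. -/
def restrictRel (Δ : Set Ω) (s : Set (Ω × Ω)) : Set (↥(Δᶜ) × ↥(Δᶜ)) :=
  {p | ((p.1 : Ω), (p.2 : Ω)) ∈ s}

/-- The restriction of a subset of `Ω` to the complement of `Δ`. -/
def restrictSet (Δ Γ : Set Ω) : Set ↥(Δᶜ) := {x | (x : Ω) ∈ Γ}

lemma Equiv.swap_apply_mem_iff {α : Type*} [DecidableEq α] {a b x : α} {s : Set α}
    (h : a ∈ s ↔ b ∈ s) : swap a b x ∈ s ↔ x ∈ s := by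
  rw [swap_apply_def]
  split_ifs <;> simp_all

open MulAction

section OrbitConfiguration

variable (K : Type*) [Group K] [MulAction K Ω]

lemma isPartition_range_orbit : Setoid.IsPartition (range (orbit K : Ω → Set Ω)) :=
  ⟨fun ⟨p, hp⟩ => (hp ▸ mem_orbit_self p : p ∈ (∅ : Set Ω)),
    fun p => ⟨orbit K p, ⟨⟨p, rfl⟩, mem_orbit_self p⟩,
      fun _ ⟨⟨_, hq⟩, hpq⟩ => hq ▸ (orbit_eq_iff.2 (hq ▸ hpq)).symm⟩⟩

variable {K}

lemma exists_orbits_sUnion_eq {r : Set (Ω × Ω)} (hr : ∀ g : K, ∀ p ∈ r, g • p ∈ r) :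
    ∃ T ⊆ range (orbit K : Ω × Ω → Set (Ω × Ω)), ⋃₀ T = r := by
  refine ⟨orbit K '' r, image_subset_range _ _, subset_antisymm ?_ ?_⟩
  · rintro _ ⟨_, ⟨q, hq, rfl⟩, g, rfl⟩
    exact hr g q hq
  · exact fun p hp => ⟨orbit K p, mem_image_of_mem _ hp, mem_orbit_self p⟩

lemma interNum_smul {r s : Set (Ω × Ω)} (hr : ∀ g : K, ∀ p ∈ r, g • p ∈ r)
    (hs : ∀ g : K, ∀ p ∈ s, g • p ∈ s) (g : K) (p : Ω × Ω) :
    interNum r s (g • p) = interNum r s p := by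
  have hsmul_mem_iff : ∀ (t : Set (Ω × Ω)), (∀ g : K, ∀ p ∈ t, g • p ∈ t) →
      ∀ p, g • p ∈ t ↔ p ∈ t :=
    fun t ht p => ⟨fun h => inv_smul_smul g p ▸ ht g⁻¹ _ h, ht g p⟩
  have himage : {γ | ((g • p).1, γ) ∈ r ∧ (γ, (g • p).2) ∈ s}
      = (g • ·) '' {γ | (p.1, γ) ∈ r ∧ (γ, p.2) ∈ s} := by
    ext γ
    rw [← smul_inv_smul g γ]
    simp only [mem_ofPred_eq, (MulAction.injective g).mem_set_image, Prod.smul_fst,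
      Prod.smul_snd]
    rw [← Prod.smul_mk, ← Prod.smul_mk, hsmul_mem_iff r hr, hsmul_mem_iff s hs]
  rw [interNum, himage, ncard_image_of_injective _ (MulAction.injective g), interNum]

variable (K) in
noncomputable def orbitCC : CoherentConfiguration Ω where
  S := range (orbit K)
  isPartition := isPartition_range_orbit K
  diag_isRelation := exists_orbits_sUnion_eq fun g p hp => ⟨congrArg (g • ·) hp.1, trivial⟩
  swap_mem := by
    rintro _ ⟨p, rfl⟩
    refine ⟨p.swap, ?_⟩
    ext q
    simp only [mem_orbit_iff, mem_ofPred_eq, ← Prod.smul_swap, Prod.swap_eq_iff_eq_swap]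
    rfl
  coherent := by
    rintro r ⟨x, rfl⟩ s ⟨y, rfl⟩ t ⟨z, rfl⟩ p ⟨g, rfl⟩ q ⟨h, rfl⟩
    have hr : ∀ k : K, ∀ p ∈ orbit K x, k • p ∈ orbit K x := fun k _ => mem_orbit_of_mem_orbit k
    have hs : ∀ k : K, ∀ p ∈ orbit K y, k • p ∈ orbit K y := fun k _ => mem_orbit_of_mem_orbit k
    rw [interNum_smul hr hs, interNum_smul hr hs]

lemma orbitCC_isRelation {r : Set (Ω × Ω)} (hr : ∀ g : K, ∀ p ∈ r, g • p ∈ r) :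
    (orbitCC K).IsRelation r :=
  exists_orbits_sUnion_eq hr

lemma smul_mem_of_le_orbitCC {X : CoherentConfiguration Ω} (hle : CCle X (orbitCC K))
    {s : Set (Ω × Ω)} (hs : s ∈ X.S) (g : K) {p : Ω × Ω} (hp : p ∈ s) : g • p ∈ s := by
  obtain ⟨T, hT, rfl⟩ := hle s ⟨{s}, singleton_subset_iff.2 hs, sUnion_singleton s⟩
  obtain ⟨_, hc, hpc⟩ := hp
  obtain ⟨q, rfl⟩ := hT hc
  exact ⟨_, hc, mem_orbit_of_mem_orbit g hpc⟩

end OrbitConfiguration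

namespace CoherentConfiguration

lemma eq_of_mem_of_mem {X : CoherentConfiguration Ω} {r s : Set (Ω × Ω)} (hr : r ∈ X.S)
    (hs : s ∈ X.S) {p : Ω × Ω} (hpr : p ∈ r) (hps : p ∈ s) : r = s :=
  (X.isPartition.2 p).unique ⟨hr, hpr⟩ ⟨hs, hps⟩

lemma IsFiber.mem_of_isRelation_diagRel {X : CoherentConfiguration Ω} {Δ₀ Δ : Set Ω}
    (hΔ₀ : X.IsFiber Δ₀) {a b : Ω} (ha : a ∈ Δ₀) (hb : b ∈ Δ₀)
    (hΔ : X.IsRelation (diagRel Δ)) (haΔ : a ∈ Δ) : b ∈ Δ := by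
  obtain ⟨T, hT, hTΔ⟩ := hΔ
  obtain ⟨c, hcT, hac⟩ : (a, a) ∈ ⋃₀ T := hTΔ ▸ ⟨rfl, haΔ⟩
  have hc : c = diagRel Δ₀ := eq_of_mem_of_mem (hT hcT) hΔ₀ hac ⟨rfl, ha⟩
  have hbb : (b, b) ∈ diagRel Δ := hTΔ ▸ ⟨c, hcT, hc ▸ ⟨rfl, hb⟩⟩
  exact hbb.2

end CoherentConfiguration

open Equiv in
lemma IsTwin.adj_swap_of_adj [DecidableEq Ω] {G : SimpleGraph Ω} {a b : Ω} (h : IsTwin G a b)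
    {x y : Ω} (hxy : G.Adj x y) : G.Adj (swap a b x) (swap a b y) := by
  rw [swap_apply_def, swap_apply_def]
  split_ifs <;> subst_vars <;> grind [IsTwin, SimpleGraph.irrefl, SimpleGraph.adj_comm]

def partAut (G : SimpleGraph Ω) (π : Set (Set Ω)) : Subgroup (Equiv.Perm Ω) where
  carrier := {g | (∀ x y, G.Adj (g x) (g y) ↔ G.Adj x y) ∧ ∀ Δ ∈ π, ∀ x, g x ∈ Δ ↔ x ∈ Δ}
  mul_mem' := fun ⟨hadj, hπ⟩ ⟨hadj', hπ'⟩ =>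
    ⟨fun x y => (hadj _ _).trans (hadj' x y), fun Δ hΔ x => (hπ Δ hΔ _).trans (hπ' Δ hΔ x)⟩
  one_mem' := ⟨fun _ _ => Iff.rfl, fun _ _ _ => Iff.rfl⟩
  inv_mem' := fun {g} ⟨hadj, hπ⟩ =>
    ⟨fun x y => by simpa using (hadj (g⁻¹ x) (g⁻¹ y)).symm,
      fun Δ hΔ x => by simpa using (hπ Δ hΔ (g⁻¹ x)).symm⟩

lemma IsWLPart.apply_mem_of_mem_partAut {G : SimpleGraph Ω} {π : Set (Set Ω)}
    {X : CoherentConfiguration Ω} (hWL : IsWLPart G π X) {g : Equiv.Perm Ω}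
    (hg : g ∈ partAut G π) {s : Set (Ω × Ω)} (hs : s ∈ X.S) {p : Ω × Ω} (hp : p ∈ s) :
    (g p.1, g p.2) ∈ s := by
  have hle : CCle X (orbitCC (partAut G π)) :=
    hWL.2.2 _ (orbitCC_isRelation fun g _ hp => (g.2.1 _ _).2 hp)
      fun Δ hΔ => orbitCC_isRelation fun g _ hp =>
        ⟨congrArg (g : Equiv.Perm Ω) hp.1, (g.2.2 Δ hΔ _).2 hp.2⟩
  exact smul_mem_of_le_orbitCC hle hs ⟨g, hg⟩ hp

theorem stmt_11_general {Ω : Type*} (G : SimpleGraph Ω)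
    (π : Set (Set Ω)) (X : CoherentConfiguration Ω)
    (hWL : IsWLPart G π X)
    (a b : Ω) (h : IsTwin G a b)
    (hfib : ∃ Δ : Set Ω, X.IsFiber Δ ∧ a ∈ Δ ∧ b ∈ Δ) :
    XTwin X a b := by
  classical
  obtain ⟨Δ₀, hΔ₀, ha, hb⟩ := hfib
  have hswap : Equiv.swap a b ∈ partAut G π := by
    refine ⟨fun x y => ⟨fun hxy => ?_, h.adj_swap_of_adj⟩,
      fun Δ hΔ x => Equiv.swap_apply_mem_iff ?_⟩
    · simpa only [Equiv.swap_apply_self] using h.adj_swap_of_adj hxy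
    · have hrel := hWL.2.1 Δ hΔ
      exact ⟨hΔ₀.mem_of_isRelation_diagRel ha hb hrel, hΔ₀.mem_of_isRelation_diagRel hb ha hrel⟩
  intro γ hγa hγb s hs
  have hγ : Equiv.swap a b γ = γ := Equiv.swap_apply_of_ne_of_ne hγa hγb
  constructor <;> intro hp <;> simpa [hγ] using hWL.apply_mem_of_mem_partAut hswap hs hp

/-- For a correct partition `π` of a finite graph `G` and
`X = WL(G)_π`, every two twins in `G` belonging to the same fiber of `X` are
`X`-twins. -/
theorem stmt_11 {Ω : Type*} [Fintype Ω] (G : SimpleGraph Ω)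
    (π : Set (Set Ω)) (X : CoherentConfiguration Ω)
    (hWL : IsWLPart G π X) (hcorrect : π = {Δ | X.IsFiber Δ})
    (a b : Ω) (h : IsTwin G a b)
    (hfib : ∃ Δ : Set Ω, X.IsFiber Δ ∧ a ∈ Δ ∧ b ∈ Δ) :
    XTwin X a b :=
  stmt_11_general G π X hWL a b h hfib
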